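/- Let X be a Hermitian operator on H_A⊗H_B⊗H_C and define M(X) = max over unit product vectors a⊗b⊗c of ⟨a⊗b⊗c|X|a⊗b⊗c⟩, assuming M(X) ≥ 0. Then for every k ≥ 1, M(X)^k ≤ λ_max( Π_k^{⊗3} X^{⊗k} Π_k^{⊗3} ), where λ_max is the largest eigenvalue and Π_k the symmetric projector on the k copies of each local factor. -/

import Mathlib

open scoped InnerProductSpace BigOperators ComplexConjugate

noncomputable section

variable {dA dB dC : ℕ}

/-- The elementary product tensor `a ⊗ b ⊗ c` in `H_A ⊗ H_B ⊗ H_C`. -/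
def prodVec3 (a : EuclideanSpace ℂ (Fin dA)) (b : EuclideanSpace ℂ (Fin dB))
    (c : EuclideanSpace ℂ (Fin dC)) :
    EuclideanSpace ℂ (Fin dA × Fin dB × Fin dC) :=
  WithLp.toLp 2 (fun p : Fin dA × Fin dB × Fin dC => a p.1 * b p.2.1 * c p.2.2)

/-- The matrix of the symmetric projector `Π_k = (1/k!) ∑_{π ∈ S_k} V_π`
on `(ℂ^d)^{⊗k}`. -/
def symMat (d k : ℕ) : Matrix (Fin k → Fin d) (Fin k → Fin d) ℂ :=
  ((k.factorial : ℂ))⁻¹ •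
    ∑ π : Equiv.Perm (Fin k),
      Matrix.of fun f g => if f = (fun j => g (π j)) then (1 : ℂ) else 0

/-- The matrix of `Π_k ⊗ Π_k ⊗ Π_k` on the `k`-copy tripartite space, with tensor
factors grouped per party. -/
def symMat3 (dA dB dC k : ℕ) :
    Matrix ((Fin k → Fin dA) × (Fin k → Fin dB) × (Fin k → Fin dC))
      ((Fin k → Fin dA) × (Fin k → Fin dB) × (Fin k → Fin dC)) ℂ :=
  Matrix.of fun p q =>
    symMat dA k p.1 q.1 * symMat dB k p.2.1 q.2.1 * symMat dC k p.2.2 q.2.2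

/-- The largest value of the Rayleigh quotient of a matrix over unit vectors; for a
Hermitian matrix this is its largest eigenvalue `λ_max`. -/
def rayleighMax {ι : Type*} [Fintype ι] [DecidableEq ι] (Y : Matrix ι ι ℂ) : ℝ :=
  sSup {r : ℝ | ∃ v : EuclideanSpace ℂ ι, ‖v‖ = 1 ∧
    r = (⟪v, Matrix.toEuclideanLin Y v⟫_ℂ).re}

/-- The `k`-fold tensor power `X^{⊗k}` of an operator on `H_A ⊗ H_B ⊗ H_C`, acting on
the `k`-copy space with local factors regrouped by party. -/
def opPow (X : Matrix (Fin dA × Fin dB × Fin dC) (Fin dA × Fin dB × Fin dC) ℂ)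
    (k : ℕ) :
    Matrix ((Fin k → Fin dA) × (Fin k → Fin dB) × (Fin k → Fin dC))
      ((Fin k → Fin dA) × (Fin k → Fin dB) × (Fin k → Fin dC)) ℂ :=
  Matrix.of fun p q =>
    ∏ j : Fin k, X (p.1 j, p.2.1 j, p.2.2 j) (q.1 j, q.2.1 j, q.2.2 j)

-- basic sum-power lemma
lemma sum_fun_prod {ι : Type*} [Fintype ι] (k : ℕ) (F : ι → ℂ) :
    ∑ f : Fin k → ι, ∏ j, F (f j) = (∑ i, F i) ^ k := by
  rw [Finset.sum_pow', Fintype.piFinset_univ]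

lemma sum_fun_prod_real {ι : Type*} [Fintype ι] (k : ℕ) (F : ι → ℝ) :
    ∑ f : Fin k → ι, ∏ j, F (f j) = (∑ i, F i) ^ k := by
  rw [Finset.sum_pow', Fintype.piFinset_univ]

lemma triple_sum_factor {R : Type*} [CommSemiring R] {α β γ : Type*} [Fintype α] [Fintype β] [Fintype γ]
    (A : α → R) (B : β → R) (C : γ → R) :
    ∑ x : α, ∑ y : β, ∑ z : γ, A x * B y * C z
      = (∑ x, A x) * (∑ y, B y) * (∑ z, C z) := by
  simp only [mul_assoc, ← Finset.mul_sum, ← Finset.sum_mul]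

lemma comp_perm_eq_iff {d k : ℕ} (f g : Fin k → Fin d) (π : Equiv.Perm (Fin k)) :
    (f = fun j => g (π j)) ↔ (g = fun j => f (π.symm j)) := by
  constructor <;> intro h <;> funext j <;> rw [h] <;> simp

lemma symMat_mulVec {d k : ℕ} (w : (Fin k → Fin d) → ℂ)
    (hw : ∀ (π : Equiv.Perm (Fin k)) (f : Fin k → Fin d), w (fun j => f (π j)) = w f) :
    (symMat d k).mulVec w = w := by
  funext f
  simp only [symMat, Matrix.mulVec, dotProduct, Matrix.smul_apply,
    Matrix.sum_apply, Matrix.of_apply, smul_eq_mul, Finset.sum_mul, Finset.mul_sum]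
  rw [Finset.sum_comm]
  have h1 : ∀ π : Equiv.Perm (Fin k),
      ∑ g : Fin k → Fin d, ((↑k.factorial : ℂ)⁻¹ * if f = fun j => g (π j) then (1:ℂ) else 0) * w g
        = (↑k.factorial : ℂ)⁻¹ * w f := by
    intro π
    rw [Finset.sum_eq_single (fun j => f (π.symm j))]
    · rw [if_pos ((comp_perm_eq_iff f _ π).2 rfl), mul_one, hw π.symm f]
    · intro g _ hg
      rw [if_neg, mul_zero, zero_mul]
      rw [comp_perm_eq_iff]
      intro h
      exact hg h
    · simp
  rw [Finset.sum_congr rfl fun π _ => h1 π, Finset.sum_const, Finset.card_univ,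
    Fintype.card_perm, Fintype.card_fin, nsmul_eq_mul]
  rw [← mul_assoc, mul_inv_cancel₀, one_mul]
  exact_mod_cast Nat.factorial_ne_zero k

lemma symMat_isHermitian {d k : ℕ} : (symMat d k).IsHermitian := by
  unfold symMat
  ext f g
  simp only [Matrix.conjTranspose_apply, Matrix.smul_apply, Matrix.sum_apply, Matrix.of_apply,
    smul_eq_mul, star_mul', star_sum, apply_ite (star : ℂ → ℂ), star_one, star_zero]
  rw [star_inv₀]
  congr 1
  · norm_cast
  rw [← Equiv.sum_comp (Equiv.inv (Equiv.Perm (Fin k)))]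
  refine Finset.sum_congr rfl fun π _ => ?_
  simp only [Equiv.inv_apply]
  exact if_congr (comp_perm_eq_iff f g π).symm rfl rfl

lemma symMat3_isHermitian {k : ℕ} : (symMat3 dA dB dC k).IsHermitian := by
  ext p q
  simp only [Matrix.conjTranspose_apply, symMat3, Matrix.of_apply, star_mul']
  have sA : star (symMat dA k q.1 p.1) = symMat dA k p.1 q.1 := by
    rw [← Matrix.conjTranspose_apply, symMat_isHermitian.eq]
  have sB : star (symMat dB k q.2.1 p.2.1) = symMat dB k p.2.1 q.2.1 := by
    rw [← Matrix.conjTranspose_apply, symMat_isHermitian.eq]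
  have sC : star (symMat dC k q.2.2 p.2.2) = symMat dC k p.2.2 q.2.2 := by
    rw [← Matrix.conjTranspose_apply, symMat_isHermitian.eq]
  rw [sA, sB, sC]

/-- factorized mulVec for symMat3 on a product vector -/
lemma symMat3_mulVec {k : ℕ} (wA : (Fin k → Fin dA) → ℂ) (wB : (Fin k → Fin dB) → ℂ)
    (wC : (Fin k → Fin dC) → ℂ)
    (hA : ∀ (π : Equiv.Perm (Fin k)) f, wA (fun j => f (π j)) = wA f)
    (hB : ∀ (π : Equiv.Perm (Fin k)) f, wB (fun j => f (π j)) = wB f)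
    (hC : ∀ (π : Equiv.Perm (Fin k)) f, wC (fun j => f (π j)) = wC f) :
    (symMat3 dA dB dC k).mulVec (fun p => wA p.1 * wB p.2.1 * wC p.2.2)
      = fun p => wA p.1 * wB p.2.1 * wC p.2.2 := by
  funext p
  have := congrFun (symMat_mulVec wA hA) p.1
  have hb := congrFun (symMat_mulVec wB hB) p.2.1
  have hc := congrFun (symMat_mulVec wC hC) p.2.2
  simp only [Matrix.mulVec, dotProduct] at this hb hc ⊢
  simp only [symMat3, Matrix.of_apply]
  rw [Fintype.sum_prod_type]
  calc ∑ x : Fin k → Fin dA, ∑ y : (Fin k → Fin dB) × (Fin k → Fin dC),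
        symMat dA k p.1 x * symMat dB k p.2.1 y.1 * symMat dC k p.2.2 y.2 *
          (wA x * wB y.1 * wC y.2)
      = ∑ x : Fin k → Fin dA, ∑ y : Fin k → Fin dB, ∑ z : Fin k → Fin dC,
          (symMat dA k p.1 x * wA x) * (symMat dB k p.2.1 y * wB y) *
            (symMat dC k p.2.2 z * wC z) := by
        refine Finset.sum_congr rfl fun x _ => ?_
        rw [Fintype.sum_prod_type]
        refine Finset.sum_congr rfl fun y _ => Finset.sum_congr rfl fun z _ => ?_
        ring
    _ = (∑ x, symMat dA k p.1 x * wA x) * (∑ y, symMat dB k p.2.1 y * wB y) *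
          (∑ z, symMat dC k p.2.2 z * wC z) := triple_sum_factor _ _ _
    _ = wA p.1 * wB p.2.1 * wC p.2.2 := by rw [this, hb, hc]

def tripleEquiv (dA dB dC k : ℕ) :
    ((Fin k → Fin dA) × (Fin k → Fin dB) × (Fin k → Fin dC))
      ≃ (Fin k → Fin dA × Fin dB × Fin dC) where
  toFun p := fun j => (p.1 j, p.2.1 j, p.2.2 j)
  invFun f := (fun j => (f j).1, fun j => (f j).2.1, fun j => (f j).2.2)
  left_inv p := rfl
  right_inv f := rfl

lemma double_sum_pow {ι : Type*} [Fintype ι] (k : ℕ) (F : ι → ι → ℂ) :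
    ∑ f : Fin k → ι, ∑ g : Fin k → ι, ∏ j, F (f j) (g j)
      = (∑ x : ι × ι, F x.1 x.2) ^ k := by
  calc ∑ f : Fin k → ι, ∑ g : Fin k → ι, ∏ j, F (f j) (g j)
      = ∑ p : (Fin k → ι) × (Fin k → ι), ∏ j, F (p.1 j) (p.2 j) :=
        (Fintype.sum_prod_type (fun p : (Fin k → ι) × (Fin k → ι) => ∏ j, F (p.1 j) (p.2 j))).symm
    _ = ∑ h : Fin k → ι × ι, ∏ j, F (h j).1 (h j).2 :=
        (Fintype.sum_equiv (Equiv.arrowProdEquivProdArrow (Fin k) (fun _ => ι) (fun _ => ι))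
          (fun h => ∏ j, F (h j).1 (h j).2)
          (fun p => ∏ j, F (p.1 j) (p.2 j)) (fun h => rfl)).symm
    _ = (∑ x : ι × ι, F x.1 x.2) ^ k := sum_fun_prod k (fun x : ι × ι => F x.1 x.2)

lemma inner_herm_move {ι : Type*} [Fintype ι] [DecidableEq ι]
    (S : Matrix ι ι ℂ) (hS : S.IsHermitian) (v w : ι → ℂ) (hv : S.mulVec v = v) :
    ∑ p, conj (v p) * S.mulVec w p = ∑ p, conj (v p) * w p := by
  have key : ∀ q, ∑ p, conj (v p) * S p q = conj (v q) := by
    intro q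
    have h1 : ∑ p, conj (v p) * S p q = star ((S.conjTranspose.mulVec v) q) := by
      simp only [Matrix.mulVec, dotProduct, Matrix.conjTranspose_apply,
        star_sum, star_mul', star_star]
      exact Finset.sum_congr rfl fun p _ => mul_comm _ _
    rw [h1, show S.conjTranspose = S from hS.eq, hv]; rfl
  calc ∑ p, conj (v p) * S.mulVec w p
      = ∑ p, ∑ q, conj (v p) * S p q * w q := by
        refine Finset.sum_congr rfl fun p _ => ?_
        simp only [Matrix.mulVec, dotProduct, Finset.mul_sum, mul_assoc]
    _ = ∑ q, (∑ p, conj (v p) * S p q) * w q := by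
        rw [Finset.sum_comm]
        exact Finset.sum_congr rfl fun q _ => (Finset.sum_mul _ _ _).symm
    _ = ∑ q, conj (v q) * w q := by
        exact Finset.sum_congr rfl fun q _ => by rw [key q]

lemma rayleigh_bddAbove {ι : Type*} [Fintype ι] [DecidableEq ι] (Y : Matrix ι ι ℂ) :
    BddAbove {r : ℝ | ∃ v : EuclideanSpace ℂ ι, ‖v‖ = 1 ∧
      r = (⟪v, Matrix.toEuclideanLin Y v⟫_ℂ).re} := by
  refine ⟨‖LinearMap.toContinuousLinearMap (Matrix.toEuclideanLin Y)‖, ?_⟩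
  rintro r ⟨v, hv, rfl⟩
  calc (⟪v, Matrix.toEuclideanLin Y v⟫_ℂ).re
      ≤ ‖⟪v, Matrix.toEuclideanLin Y v⟫_ℂ‖ := Complex.re_le_norm _
    _ ≤ ‖v‖ * ‖Matrix.toEuclideanLin Y v‖ := norm_inner_le_norm _ _
    _ = ‖LinearMap.toContinuousLinearMap (Matrix.toEuclideanLin Y) v‖ := by
        rw [hv, one_mul]; rfl
    _ ≤ ‖LinearMap.toContinuousLinearMap (Matrix.toEuclideanLin Y)‖ * ‖v‖ :=
        ContinuousLinearMap.le_opNorm _ _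
    _ = _ := by rw [hv, mul_one]

lemma triple_prod_sum {R : Type*} [CommSemiring R] {α β γ : Type*}
    [Fintype α] [Fintype β] [Fintype γ] (A : α → R) (B : β → R) (C : γ → R) :
    ∑ p : α × β × γ, A p.1 * B p.2.1 * C p.2.2
      = (∑ x, A x) * (∑ y, B y) * (∑ z, C z) := by
  calc ∑ p : α × β × γ, A p.1 * B p.2.1 * C p.2.2
      = ∑ x : α, ∑ y : β × γ, A x * B y.1 * C y.2 :=
        Fintype.sum_prod_type (fun p : α × β × γ => A p.1 * B p.2.1 * C p.2.2)
    _ = ∑ x : α, ∑ y : β, ∑ z : γ, A x * B y * C z :=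
        Finset.sum_congr rfl fun x _ =>
          Fintype.sum_prod_type (fun y : β × γ => A x * B y.1 * C y.2)
    _ = _ := triple_sum_factor A B C

lemma inner_toEuclideanLin {ι : Type*} [Fintype ι] [DecidableEq ι] (Y : Matrix ι ι ℂ)
    (x : EuclideanSpace ℂ ι) :
    ⟪x, Matrix.toEuclideanLin Y x⟫_ℂ = ∑ i, conj (x i) * Y.mulVec x i := by
  rw [Matrix.toEuclideanLin_apply, PiLp.inner_apply]
  exact Finset.sum_congr rfl fun i _ => mul_comm _ _

lemma unit_sum_sq {d : ℕ} (x : EuclideanSpace ℂ (Fin d)) (hx : ‖x‖ = 1) :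
    ∑ i, ‖x i‖ ^ 2 = 1 := by
  have h := EuclideanSpace.norm_eq x
  rw [hx] at h
  have h0 : (0:ℝ) ≤ ∑ i, ‖x i‖ ^ 2 := Finset.sum_nonneg fun i _ => sq_nonneg _
  nlinarith [Real.sq_sqrt h0]

/-- For a Hermitian `X` with maximal separable expectation `M(X) ≥ 0`, one has
`M(X)^k ≤ λ_max(Π_k^{⊗3} X^{⊗k} Π_k^{⊗3})` for every `k ≥ 1`. -/
theorem sepRange_pow_le_rayleighMax
    (X : Matrix (Fin dA × Fin dB × Fin dC) (Fin dA × Fin dB × Fin dC) ℂ)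
    (hX : X.IsHermitian) (M : ℝ) (hM0 : 0 ≤ M)
    (hM : IsGreatest {r : ℝ | ∃ (a : EuclideanSpace ℂ (Fin dA))
        (b : EuclideanSpace ℂ (Fin dB)) (c : EuclideanSpace ℂ (Fin dC)),
        ‖a‖ = 1 ∧ ‖b‖ = 1 ∧ ‖c‖ = 1 ∧
        r = (⟪prodVec3 a b c, Matrix.toEuclideanLin X (prodVec3 a b c)⟫_ℂ).re} M)
    (k : ℕ) (hk : 1 ≤ k) :
    M ^ k ≤ rayleighMax (symMat3 dA dB dC k * opPow X k * symMat3 dA dB dC k) := by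
  obtain ⟨⟨a, b, c, ha, hb, hc, hre⟩, -⟩ := hM
  set u : EuclideanSpace ℂ (Fin dA × Fin dB × Fin dC) := prodVec3 a b c with hu
  set v : EuclideanSpace ℂ ((Fin k → Fin dA) × (Fin k → Fin dB) × (Fin k → Fin dC)) :=
    WithLp.toLp 2 (fun p : (Fin k → Fin dA) × (Fin k → Fin dB) × (Fin k → Fin dC) => (∏ j, a (p.1 j)) * (∏ j, b (p.2.1 j)) * (∏ j, c (p.2.2 j))) with hvdef
  -- the value z = ⟪u, X u⟫ equals M
  set z : ℂ := ⟪u, Matrix.toEuclideanLin X u⟫_ℂ with hz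
  have hzM : z = (M : ℂ) := by
    have hsym := (Matrix.isHermitian_iff_isSymmetric.mp hX)
    have hconj : conj z = z := by
      rw [hz, inner_conj_symm]
      exact hsym u u
    obtain ⟨r, hr⟩ := Complex.conj_eq_iff_real.mp hconj
    have hM' : M = r := by rw [hre, hr]; simp
    rw [hz] at hr ⊢
    rw [hr, hM']
  -- norm of v
  have hnv : ‖v‖ = 1 := by
    rw [EuclideanSpace.norm_eq]
    have h1 : ∑ p, ‖v p‖ ^ 2 = 1 := by
      have hterm : ∀ p, ‖v p‖ ^ 2 =
          (∏ j, ‖a (p.1 j)‖ ^ 2) * (∏ j, ‖b (p.2.1 j)‖ ^ 2) * (∏ j, ‖c (p.2.2 j)‖ ^ 2) := by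
        intro p
        rw [hvdef]
        simp only [norm_mul, norm_prod, mul_pow, ← Finset.prod_pow]
      rw [Finset.sum_congr rfl fun p _ => hterm p,
        triple_prod_sum (fun f : Fin k → Fin dA => ∏ j, ‖a (f j)‖ ^ 2)
          (fun f : Fin k → Fin dB => ∏ j, ‖b (f j)‖ ^ 2)
          (fun f : Fin k → Fin dC => ∏ j, ‖c (f j)‖ ^ 2),
        sum_fun_prod_real k (fun i => ‖a i‖ ^ 2), sum_fun_prod_real k (fun i => ‖b i‖ ^ 2),
        sum_fun_prod_real k (fun i => ‖c i‖ ^ 2),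
        unit_sum_sq a ha, unit_sum_sq b hb, unit_sum_sq c hc]
      norm_num
    rw [h1, Real.sqrt_one]
  -- invariance
  have hSv : (symMat3 dA dB dC k).mulVec v = v := by
    exact symMat3_mulVec (fun f => ∏ j, a (f j)) (fun f => ∏ j, b (f j))
      (fun f => ∏ j, c (f j))
      (fun π f => Equiv.prod_comp π fun j => a (f j))
      (fun π f => Equiv.prod_comp π fun j => b (f j))
      (fun π f => Equiv.prod_comp π fun j => c (f j))
  -- the Rayleigh quotient value at v
  have hvp : ∀ p : (Fin k → Fin dA) × (Fin k → Fin dB) × (Fin k → Fin dC),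
      v p = ∏ j, u (p.1 j, p.2.1 j, p.2.2 j) := by
    intro p
    rw [hvdef]
    simp only [hu, prodVec3]
    rw [Finset.prod_mul_distrib, Finset.prod_mul_distrib]
  have hzsum : z = ∑ x : (Fin dA × Fin dB × Fin dC) × (Fin dA × Fin dB × Fin dC),
      conj (u x.1) * X x.1 x.2 * u x.2 := by
    rw [hz, inner_toEuclideanLin]
    rw [Fintype.sum_prod_type (fun x : (Fin dA × Fin dB × Fin dC) × (Fin dA × Fin dB × Fin dC) =>
      conj (u x.1) * X x.1 x.2 * u x.2)]
    refine Finset.sum_congr rfl fun i _ => ?_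
    simp only [Matrix.mulVec, dotProduct, Finset.mul_sum]
    refine Finset.sum_congr rfl fun q _ => ?_
    ring
  have hinner : ⟪v, Matrix.toEuclideanLin
      (symMat3 dA dB dC k * opPow X k * symMat3 dA dB dC k) v⟫_ℂ = (M : ℂ) ^ k := by
    rw [inner_toEuclideanLin]
    rw [← Matrix.mulVec_mulVec, ← Matrix.mulVec_mulVec, hSv,
      inner_herm_move _ symMat3_isHermitian _ _ hSv]
    calc ∑ p, conj (v p) * (opPow X k).mulVec v p
        = ∑ p : (Fin k → Fin dA) × (Fin k → Fin dB) × (Fin k → Fin dC),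
            ∑ q : (Fin k → Fin dA) × (Fin k → Fin dB) × (Fin k → Fin dC),
            ∏ j, (conj (u (p.1 j, p.2.1 j, p.2.2 j))
            * X (p.1 j, p.2.1 j, p.2.2 j) (q.1 j, q.2.1 j, q.2.2 j)
            * u (q.1 j, q.2.1 j, q.2.2 j)) := by
          refine Finset.sum_congr rfl fun p _ => ?_
          simp only [Matrix.mulVec, dotProduct, Finset.mul_sum]
          refine Finset.sum_congr rfl fun q _ => ?_
          rw [hvp p, hvp q, map_prod]
          simp only [opPow, Matrix.of_apply]
          rw [← mul_assoc, ← Finset.prod_mul_distrib, ← Finset.prod_mul_distrib]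
      _ = ∑ f : Fin k → Fin dA × Fin dB × Fin dC, ∑ g : Fin k → Fin dA × Fin dB × Fin dC,
            ∏ j, (conj (u (f j)) * X (f j) (g j) * u (g j)) := by
          refine Fintype.sum_equiv (tripleEquiv dA dB dC k) _ _ fun p => ?_
          exact Fintype.sum_equiv (tripleEquiv dA dB dC k) _ _ fun q => rfl
      _ = (∑ x : (Fin dA × Fin dB × Fin dC) × (Fin dA × Fin dB × Fin dC),
            conj (u x.1) * X x.1 x.2 * u x.2) ^ k :=
          double_sum_pow k (fun i i' => conj (u i) * X i i' * u i')
      _ = (M : ℂ) ^ k := by rw [← hzsum, hzM]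
  have hmem : M ^ k ∈ {r : ℝ | ∃ w : EuclideanSpace ℂ
      ((Fin k → Fin dA) × (Fin k → Fin dB) × (Fin k → Fin dC)), ‖w‖ = 1 ∧
      r = (⟪w, Matrix.toEuclideanLin
        (symMat3 dA dB dC k * opPow X k * symMat3 dA dB dC k) w⟫_ℂ).re} := by
    refine ⟨v, hnv, ?_⟩
    rw [hinner, ← Complex.ofReal_pow, Complex.ofReal_re]
  unfold rayleighMax
  exact le_csSup (rayleigh_bddAbove _) hmem
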